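/- For every integer N ≥ 1, every β > 0 and every σ > 0, the integral ∫_{(0,∞)^N} ∏_{i=1}^N exp(−(log u_i)²/(2σ²)) · ∏_{1≤i<j≤N} |u_i − u_j|^β du₁…du_N is finite. -/

import Mathlib

/-!
On the positive orthant `|uᵢ - uⱼ| ≤ (1 + uᵢ)(1 + uⱼ)`, so the Vandermonde factor is
dominated by `∏ᵢ (1 + uᵢ) ^ (2Nβ)`, and the integrand by a product of one-variable functions
`(1 + t) ^ c · exp (-(log t)² / (2σ²))`. These are integrable on `(0, ∞)` because the
log-normal weight has moments of every order: the substitution `t = eˢ` turns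
`tᵃ · exp (-(log t)² / (2σ²)) dt` into the Gaussian `exp (-s² / (2σ²) + (a + 1) s) ds`.
-/

open MeasureTheory Real Set Finset

noncomputable def stieltjesWigertWeight (σ t : ℝ) : ℝ := exp (-log t ^ 2 / (2 * σ ^ 2))

theorem integrableOn_Ioi_zero_iff_integrable_comp_exp {E : Type*} [NormedAddCommGroup E]
    [NormedSpace ℝ E] (g : ℝ → E) :
    IntegrableOn g (Ioi 0) ↔ Integrable (fun s ↦ exp s • g (exp s)) := by
  rw [← range_exp, ← image_univ, integrableOn_image_iff_integrableOn_abs_deriv_smul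
    MeasurableSet.univ (fun x _ ↦ (hasDerivAt_exp x).hasDerivWithinAt) exp_injective.injOn,
    integrableOn_univ]
  simp only [abs_of_pos (exp_pos _)]

theorem integrable_exp_neg_mul_sq_add_mul {b : ℝ} (hb : 0 < b) (c : ℝ) :
    Integrable (fun x : ℝ ↦ exp (-b * x ^ 2 + c * x)) := by
  have h := ((integrable_exp_neg_mul_sq hb).comp_sub_right (c / (2 * b))).const_mul
    (exp (c ^ 2 / (4 * b)))
  refine h.congr (ae_of_all _ fun x ↦ ?_)
  simp only [← exp_add]
  congr 1
  field_simp
  ring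

theorem integrableOn_rpow_mul_stieltjesWigertWeight {σ : ℝ} (hσ : σ ≠ 0) (a : ℝ) :
    IntegrableOn (fun t ↦ t ^ a * stieltjesWigertWeight σ t) (Ioi 0) := by
  rw [integrableOn_Ioi_zero_iff_integrable_comp_exp]
  refine (integrable_exp_neg_mul_sq_add_mul (b := 1 / (2 * σ ^ 2)) (by positivity) (a + 1)).congr
    (ae_of_all _ fun s ↦ ?_)
  simp only [stieltjesWigertWeight, smul_eq_mul, log_exp, ← exp_mul, ← exp_add]
  congr 1
  field_simp
  ring

theorem one_add_rpow_le_two_rpow_mul {t c : ℝ} (ht : 0 ≤ t) (hc : 0 ≤ c) :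
    (1 + t) ^ c ≤ 2 ^ c * (1 + t ^ c) := by
  have htc : 0 ≤ t ^ c := rpow_nonneg ht c
  rcases le_total t 1 with h | h
  · calc (1 + t) ^ c ≤ 2 ^ c := rpow_le_rpow (by positivity) (by linarith) hc
      _ ≤ 2 ^ c * (1 + t ^ c) := le_mul_of_one_le_right (by positivity) (by linarith)
  · calc (1 + t) ^ c ≤ (2 * t) ^ c := rpow_le_rpow (by positivity) (by linarith) hc
      _ = 2 ^ c * t ^ c := mul_rpow zero_le_two ht
      _ ≤ 2 ^ c * (1 + t ^ c) := by gcongr; linarith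

theorem integrableOn_one_add_rpow_mul_stieltjesWigertWeight {σ : ℝ} (hσ : σ ≠ 0) {c : ℝ}
    (hc : 0 ≤ c) :
    IntegrableOn (fun t ↦ (1 + t) ^ c * stieltjesWigertWeight σ t) (Ioi 0) := by
  have hdom := ((integrableOn_rpow_mul_stieltjesWigertWeight hσ 0).add
    (integrableOn_rpow_mul_stieltjesWigertWeight hσ c)).const_mul (2 ^ c)
  refine hdom.mono' (by unfold stieltjesWigertWeight; fun_prop) ?_
  filter_upwards [ae_restrict_mem measurableSet_Ioi] with t (ht : 0 < t)
  have hw : 0 ≤ stieltjesWigertWeight σ t := (exp_pos _).le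
  simp only [Pi.add_apply, rpow_zero, ← add_mul, ← mul_assoc]
  rw [norm_of_nonneg (by positivity)]
  exact mul_le_mul_of_nonneg_right (one_add_rpow_le_two_rpow_mul ht.le hc) hw

theorem IntegrableOn.prod_apply_univ_pi {ι E 𝕜 : Type*} [Fintype ι] [RCLike 𝕜]
    [MeasurableSpace E] {μ : ι → Measure E} [∀ i, SigmaFinite (μ i)] {f : ι → E → 𝕜}
    {s : ι → Set E} (hf : ∀ i, IntegrableOn (f i) (s i) (μ i)) :
    IntegrableOn (fun x ↦ ∏ i, f i (x i)) (univ.pi s) (Measure.pi μ) := by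
  rw [IntegrableOn, Measure.restrict_pi_pi]
  exact Integrable.fintype_prod hf

theorem prod_prod_Ioi_mul_le_prod_pow {ι R : Type*} [Fintype ι] [LinearOrder ι]
    [LocallyFiniteOrderTop ι] [CommSemiring R] [LinearOrder R] [IsStrictOrderedRing R]
    {a : ι → R} (ha : ∀ i, 1 ≤ a i) :
    ∏ i, ∏ j ∈ Ioi i, a i * a j ≤ ∏ i, a i ^ (2 * Fintype.card ι) := by
  have hprod : ∀ i j, 1 ≤ a i * a j := fun i j ↦ one_le_mul_of_one_le_of_one_le (ha i) (ha j)
  calc ∏ i, ∏ j ∈ Ioi i, a i * a j ≤ ∏ i, ∏ j, a i * a j :=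
        prod_le_prod (fun i _ ↦ prod_nonneg fun j _ ↦ zero_le_one.trans (hprod i j))
          fun i _ ↦ prod_le_prod_of_subset_of_one_le (subset_univ _)
            (fun j _ ↦ zero_le_one.trans (hprod i j)) fun j _ _ ↦ hprod i j
    _ = ∏ i, a i ^ (2 * Fintype.card ι) := by
        simp only [prod_mul_distrib, prod_const, card_univ, Finset.prod_pow]
        ring

theorem abs_sub_le_one_add_mul_one_add {x y : ℝ} (hx : 0 ≤ x) (hy : 0 ≤ y) :
    |x - y| ≤ (1 + x) * (1 + y) :=
  abs_sub_le_iff.2 ⟨by nlinarith, by nlinarith⟩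

theorem prod_prod_Ioi_abs_sub_rpow_le {ι : Type*} [Fintype ι] [LinearOrder ι]
    [LocallyFiniteOrderTop ι] {u : ι → ℝ} (hu : ∀ i, 0 ≤ u i) {β : ℝ} (hβ : 0 ≤ β) :
    ∏ i, ∏ j ∈ Ioi i, |u i - u j| ^ β ≤ ∏ i, (1 + u i) ^ (2 * Fintype.card ι * β) := by
  have h1 : ∀ i, 0 ≤ 1 + u i := fun i ↦ by linarith [hu i]
  calc ∏ i, ∏ j ∈ Ioi i, |u i - u j| ^ β
      ≤ ∏ i, ∏ j ∈ Ioi i, (1 + u i) ^ β * (1 + u j) ^ β := by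
        gcongr with i _ j
        rw [← mul_rpow (h1 i) (h1 j)]
        exact rpow_le_rpow (abs_nonneg _) (abs_sub_le_one_add_mul_one_add (hu i) (hu j)) hβ
    _ ≤ ∏ i, ((1 + u i) ^ β) ^ (2 * Fintype.card ι) :=
        prod_prod_Ioi_mul_le_prod_pow fun i ↦ one_le_rpow (by linarith [hu i]) hβ
    _ = ∏ i, (1 + u i) ^ (2 * Fintype.card ι * β) := by
        simp_rw [← rpow_mul_natCast (h1 _)]
        push_cast
        ring_nf

theorem stieltjes_wigert_integrable_general (N : ℕ) (β : ℝ) (hβ : 0 < β)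
    (σ : ℝ) (hσ : 0 < σ) :
    MeasureTheory.IntegrableOn
      (fun u : Fin N → ℝ =>
        (∏ i, Real.exp (-(Real.log (u i)) ^ 2 / (2 * σ ^ 2))) *
          ∏ i, ∏ j ∈ Finset.Ioi i, |u i - u j| ^ β)
      (Set.univ.pi fun _ => Set.Ioi (0 : ℝ)) := by
  have hdom : IntegrableOn (fun u : Fin N → ℝ ↦
      ∏ i, (1 + u i) ^ (2 * N * β) * stieltjesWigertWeight σ (u i)) (univ.pi fun _ ↦ Ioi 0) :=
    IntegrableOn.prod_apply_univ_pi fun _ ↦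
      integrableOn_one_add_rpow_mul_stieltjesWigertWeight hσ.ne' (by positivity)
  refine hdom.mono' (by fun_prop) ?_
  filter_upwards [ae_restrict_mem (MeasurableSet.univ_pi fun _ ↦ measurableSet_Ioi)] with u hu
  have hvandermonde := prod_prod_Ioi_abs_sub_rpow_le (fun i ↦ (hu i (mem_univ i)).le) hβ.le
  rw [Fintype.card_fin] at hvandermonde
  rw [norm_of_nonneg (by positivity), prod_mul_distrib, mul_comm]
  exact mul_le_mul_of_nonneg_right hvandermonde (by positivity)

/-- Finiteness of the Stieltjes–Wigert partition-function integral for any Dyson index β > 0: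
`∫_{(0,∞)^N} ∏ᵢ exp(−(log uᵢ)²/(2σ²)) · ∏_{i<j} |uᵢ − uⱼ|^β du < ∞`. -/
theorem stieltjes_wigert_integrable (N : ℕ) (hN : 1 ≤ N) (β : ℝ) (hβ : 0 < β)
    (σ : ℝ) (hσ : 0 < σ) :
    MeasureTheory.IntegrableOn
      (fun u : Fin N → ℝ =>
        (∏ i, Real.exp (-(Real.log (u i)) ^ 2 / (2 * σ ^ 2))) *
          ∏ i, ∏ j ∈ Finset.Ioi i, |u i - u j| ^ β)
      (Set.univ.pi fun _ => Set.Ioi (0 : ℝ)) :=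
  stieltjes_wigert_integrable_general N β hβ σ hσ
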